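/- Let p be a prime and A, B ⊆ ℤ/pℤ. Then Σ_{u=0}^{p−1} Σ_{v=0}^{p−1} T*(A ∩ (uB + v)) = T*(A) · T*(B), where T*(X) denotes the number of nontrivial 3APs in X. -/

import Mathlib

/-- The number of nontrivial three-term arithmetic progressions in `S ⊆ ℤ/pℤ`, i.e. the
number of ordered pairs `(n, m)` of residues with `m ≢ 0` and `n, n + m, n + 2m ∈ S`.
Such pairs are counted via the equivalent, bijective encoding `(n, m) ↦ (n, n + m)`,
a pair `(x, y) ∈ S × S` with `x ≠ y` and `n + 2m = 2y - x ∈ S`. -/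
def nontrivialThreeAPCount {p : ℕ} (S : Finset (ZMod p)) : ℕ :=
  ((S ×ˢ S).filter fun q => 2 * q.2 - q.1 ∈ S ∧ q.1 ≠ q.2).card

/-- For a prime `p` and `A, B ⊆ ℤ/pℤ`,
`∑_{u=0}^{p-1} ∑_{v=0}^{p-1} T*(A ∩ (uB + v)) = T*(A) T*(B)`, where `T*` counts
nontrivial 3APs. -/
theorem sum_nontrivial_aps_inter_dilate_translate (p : ℕ) (hp : p.Prime)
    (A B : Finset (ZMod p)) :
    ∑ u ∈ Finset.range p, ∑ v ∈ Finset.range p,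
        nontrivialThreeAPCount (A ∩ B.image fun b => (u : ZMod p) * b + (v : ZMod p)) =
      nontrivialThreeAPCount A * nontrivialThreeAPCount B := by
  haveI : Fact p.Prime := ⟨hp⟩
  haveI : NeZero p := ⟨hp.ne_zero⟩
  -- convert range sums to sums over ZMod p
  have hconv : ∀ F : ZMod p → ZMod p → ℕ,
      ∑ u ∈ Finset.range p, ∑ v ∈ Finset.range p, F (u : ZMod p) (v : ZMod p)
        = ∑ u : ZMod p, ∑ v : ZMod p, F u v := by
    intro F
    have h1 : ∀ G : ZMod p → ℕ,
        ∑ u ∈ Finset.range p, G (u : ZMod p) = ∑ u : ZMod p, G u := by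
      intro G
      refine Finset.sum_nbij' (fun u => (u : ZMod p)) (fun z => z.val) ?_ ?_ ?_ ?_ ?_
      · intro a _; exact Finset.mem_univ _
      · intro z _; exact Finset.mem_range.2 (ZMod.val_lt z)
      · intro a ha; exact ZMod.val_cast_of_lt (Finset.mem_range.1 ha)
      · intro z _; exact ZMod.natCast_rightInverse z
      · intro a _; rfl
    rw [h1 (fun u => ∑ v ∈ Finset.range p, F u (v : ZMod p))]
    exact Finset.sum_congr rfl fun u _ => h1 (F u)
  rw [hconv (fun u v => nontrivialThreeAPCount (A ∩ B.image fun b => u * b + v))]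
  -- set up the big sets
  set img : ZMod p × ZMod p → Finset (ZMod p) :=
    fun uv => B.image fun b => uv.1 * b + uv.2 with himg
  have key :
      ((Finset.univ : Finset (ZMod p × ZMod p)).sigma fun uv =>
          (((A ∩ img uv) ×ˢ (A ∩ img uv)).filter fun q =>
            2 * q.2 - q.1 ∈ A ∩ img uv ∧ q.1 ≠ q.2)).card
        = (((A ×ˢ A).filter fun q => 2 * q.2 - q.1 ∈ A ∧ q.1 ≠ q.2) ×ˢ
            ((B ×ˢ B).filter fun q => 2 * q.2 - q.1 ∈ B ∧ q.1 ≠ q.2)).card := by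
    refine Finset.card_nbij'
      (fun s => ((s.2.1, s.2.2),
        ((s.2.1 - s.1.2) * s.1.1⁻¹, (s.2.2 - s.1.2) * s.1.1⁻¹)))
      (fun r => ⟨((r.1.2 - r.1.1) * (r.2.2 - r.2.1)⁻¹,
        r.1.1 - (r.1.2 - r.1.1) * (r.2.2 - r.2.1)⁻¹ * r.2.1), (r.1.1, r.1.2)⟩)
      ?_ ?_ ?_ ?_
    · rintro ⟨⟨u, v⟩, x, y⟩ hs
      replace hs : (⟨(u, v), (x, y)⟩ : (_ : ZMod p × ZMod p) × (ZMod p × ZMod p)) ∈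
          (Finset.univ : Finset (ZMod p × ZMod p)).sigma fun uv =>
            (((A ∩ img uv) ×ˢ (A ∩ img uv)).filter fun q =>
              2 * q.2 - q.1 ∈ A ∩ img uv ∧ q.1 ≠ q.2) := hs
      show (_ : (ZMod p × ZMod p) × (ZMod p × ZMod p)) ∈ (((A ×ˢ A).filter fun q => 2 * q.2 - q.1 ∈ A ∧ q.1 ≠ q.2) ×ˢ
          ((B ×ˢ B).filter fun q => 2 * q.2 - q.1 ∈ B ∧ q.1 ≠ q.2))
      simp only [Finset.mem_sigma, Finset.mem_filter, Finset.mem_product,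
        Finset.mem_inter] at hs ⊢
      obtain ⟨-, ⟨⟨hxA, hxI⟩, hyA, hyI⟩, ⟨hzA, hzI⟩, hxy⟩ := hs
      simp only [himg, Finset.mem_image] at hxI hyI hzI
      obtain ⟨a, haB, ha⟩ := hxI
      obtain ⟨b, hbB, hb⟩ := hyI
      obtain ⟨c, hcB, hc⟩ := hzI
      have hu : u ≠ 0 := by
        rintro rfl
        apply hxy
        rw [← ha, ← hb]; ring
      have hax : (x - v) * u⁻¹ = a := by
        rw [← ha]; field_simp; ring
      have hby : (y - v) * u⁻¹ = b := by
        rw [← hb]; field_simp; ring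
      have hcz : 2 * b - a = c := by
        have h2 : u * (2 * b - a) + v = u * c + v := by
          rw [hc, ← ha, ← hb]; ring
        have h3 : u * (2 * b - a) = u * c := by
          have := add_right_cancel h2; exact this
        exact mul_left_cancel₀ hu h3
      refine ⟨⟨⟨hxA, hyA⟩, hzA, hxy⟩, ⟨⟨?_, ?_⟩, ?_, ?_⟩⟩
      · rw [hax]; exact haB
      · rw [hby]; exact hbB
      · rw [show 2 * ((y - v) * u⁻¹) - (x - v) * u⁻¹ = 2 * b - a by
          rw [hax, hby], hcz]; exact hcB
      · rw [hax, hby]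
        rintro rfl
        exact hxy (by rw [← ha, ← hb])
    · rintro ⟨⟨x, y⟩, a, b⟩ hr
      replace hr : ((x, y), (a, b)) ∈ (((A ×ˢ A).filter fun q => 2 * q.2 - q.1 ∈ A ∧ q.1 ≠ q.2) ×ˢ
          ((B ×ˢ B).filter fun q => 2 * q.2 - q.1 ∈ B ∧ q.1 ≠ q.2)) := hr
      simp only [Finset.mem_filter, Finset.mem_product] at hr
      obtain ⟨⟨⟨hxA, hyA⟩, hzA, hxy⟩, ⟨haB, hbB⟩, hcB, hab⟩ := hr
      have hba : b - a ≠ 0 := sub_ne_zero.2 (Ne.symm hab)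
      show (⟨((y - x) * (b - a)⁻¹, x - (y - x) * (b - a)⁻¹ * a), (x, y)⟩ :
          (_ : ZMod p × ZMod p) × (ZMod p × ZMod p)) ∈
          (Finset.univ : Finset (ZMod p × ZMod p)).sigma fun uv =>
            (((A ∩ img uv) ×ˢ (A ∩ img uv)).filter fun q =>
              2 * q.2 - q.1 ∈ A ∩ img uv ∧ q.1 ≠ q.2)
      set u : ZMod p := (y - x) * (b - a)⁻¹ with hu
      have hub : u * (b - a) = y - x := by
        rw [hu, mul_assoc, inv_mul_cancel₀ hba, mul_one]
      simp only [Finset.mem_sigma, Finset.mem_filter, Finset.mem_product,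
        Finset.mem_inter, Finset.mem_univ, true_and, himg, Finset.mem_image]
      have hx : u * a + (x - u * a) = x := by ring
      have hy : u * b + (x - u * a) = y := by
        have : u * b + (x - u * a) = u * (b - a) + x := by ring
        rw [this, hub]; ring
      have hz : u * (2 * b - a) + (x - u * a) = 2 * y - x := by
        have : u * (2 * b - a) + (x - u * a) = 2 * (u * (b - a)) + x := by ring
        rw [this, hub]; ring
      exact ⟨⟨⟨hxA, ⟨a, haB, hx⟩⟩, hyA, ⟨b, hbB, hy⟩⟩,
        ⟨hzA, ⟨2 * b - a, hcB, hz⟩⟩, hxy⟩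
    · rintro ⟨⟨u, v⟩, x, y⟩ hs
      replace hs : (⟨(u, v), (x, y)⟩ : (_ : ZMod p × ZMod p) × (ZMod p × ZMod p)) ∈
          (Finset.univ : Finset (ZMod p × ZMod p)).sigma fun uv =>
            (((A ∩ img uv) ×ˢ (A ∩ img uv)).filter fun q =>
              2 * q.2 - q.1 ∈ A ∩ img uv ∧ q.1 ≠ q.2) := hs
      simp only [Finset.mem_sigma, Finset.mem_filter, Finset.mem_product,
        Finset.mem_inter] at hs
      obtain ⟨-, ⟨⟨hxA, hxI⟩, hyA, hyI⟩, ⟨hzA, hzI⟩, hxy⟩ := hs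
      simp only [himg, Finset.mem_image] at hxI hyI
      obtain ⟨a, haB, ha⟩ := hxI
      obtain ⟨b, hbB, hb⟩ := hyI
      have hu : u ≠ 0 := by
        rintro rfl
        apply hxy
        rw [← ha, ← hb]; ring
      have h1 : (y - x) * ((y - v) * u⁻¹ - (x - v) * u⁻¹)⁻¹ = u := by
        have : (y - v) * u⁻¹ - (x - v) * u⁻¹ = (y - x) * u⁻¹ := by ring
        rw [this]
        have hyx : y - x ≠ 0 := sub_ne_zero.2 (Ne.symm hxy)
        field_simp
      have h3 : x - u * ((x - v) * u⁻¹) = v := by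
        have : u * ((x - v) * u⁻¹) = x - v := by
          rw [mul_comm u, mul_assoc, inv_mul_cancel₀ hu, mul_one]
        rw [this]; ring
      simp only [h1, h3]
    · rintro ⟨⟨x, y⟩, a, b⟩ hr
      replace hr : ((x, y), (a, b)) ∈ (((A ×ˢ A).filter fun q => 2 * q.2 - q.1 ∈ A ∧ q.1 ≠ q.2) ×ˢ
          ((B ×ˢ B).filter fun q => 2 * q.2 - q.1 ∈ B ∧ q.1 ≠ q.2)) := hr
      simp only [Finset.mem_filter, Finset.mem_product] at hr
      obtain ⟨⟨⟨hxA, hyA⟩, hzA, hxy⟩, ⟨haB, hbB⟩, hcB, hab⟩ := hr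
      have hba : b - a ≠ 0 := sub_ne_zero.2 (Ne.symm hab)
      have hyx : y - x ≠ 0 := sub_ne_zero.2 (Ne.symm hxy)
      set u : ZMod p := (y - x) * (b - a)⁻¹ with hu
      have hune : u ≠ 0 := mul_ne_zero hyx (inv_ne_zero hba)
      have hub : u * (b - a) = y - x := by
        rw [hu, mul_assoc, inv_mul_cancel₀ hba, mul_one]
      have h1 : (x - (x - u * a)) * u⁻¹ = a := by
        have : x - (x - u * a) = u * a := by ring
        rw [this, mul_comm u a, mul_assoc, mul_inv_cancel₀ hune, mul_one]
      have h2 : (y - (x - u * a)) * u⁻¹ = b := by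
        have e1 : y - (x - u * a) = u * b := by
          have e2 : u * b = u * (b - a) + u * a := by ring
          rw [e2, hub]; ring
        rw [e1, mul_comm u b, mul_assoc, mul_inv_cancel₀ hune, mul_one]
      show ((x, y), ((x - (x - u * a)) * u⁻¹, (y - (x - u * a)) * u⁻¹)) = ((x, y), a, b)
      simp only [h1, h2]
  -- now finish
  rw [Finset.card_sigma] at key
  simp only [Finset.card_product] at key
  rw [show (∑ u : ZMod p, ∑ v : ZMod p,
      nontrivialThreeAPCount (A ∩ B.image fun b => u * b + v))
    = ∑ uv : ZMod p × ZMod p,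
        (((A ∩ img uv) ×ˢ (A ∩ img uv)).filter fun q =>
          2 * q.2 - q.1 ∈ A ∩ img uv ∧ q.1 ≠ q.2).card from by
      rw [← Finset.sum_product']
      rfl]
  rw [key]
  rfl
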